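/- arXiv:1507.00871 — 14 statements merged into one kernel-verified Lean document; each statement's English description precedes it below -/
import Mathlib

section
/- Let f : [0, n] → ℝ be continuous with f(0) = 0 and f(n) = n, where n is a positive integer. Then there exists x ∈ [0, n-1] such that f(x+1) - f(x) = 1. -/
/-! Apply the intermediate value theorem to `g x = f (x + 1) - f x - 1` on `[0, n - 1]`: the
values of `g` at the integers `0, …, n - 1` telescope to `f n - f 0 - n = 0`, so `g` takes a value
`≤ 0` and a value `≥ 0` there. -/

open Set Finset

theorem IsPreconnected.exists_eq_zero_of_sum_eq_zero {α ι : Type*} [TopologicalSpace α]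
    {s : Set α} (hs : IsPreconnected s) {g : α → ℝ} (hg : ContinuousOn g s) {t : Finset ι}
    (ht : t.Nonempty) {p : ι → α} (hp : ∀ i ∈ t, p i ∈ s) (hsum : ∑ i ∈ t, g (p i) = 0) :
    ∃ x ∈ s, g x = 0 := by
  obtain ⟨i, hi, hgi⟩ : ∃ i ∈ t, g (p i) ≤ 0 :=
    exists_le_of_sum_le ht (by simp [hsum])
  obtain ⟨j, hj, hgj⟩ : ∃ j ∈ t, 0 ≤ g (p j) :=
    exists_le_of_sum_le ht (by simp [hsum])
  exact hs.intermediate_value (hp i hi) (hp j hj) hg ⟨hgi, hgj⟩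

theorem ContinuousOn.sub_shift_one {f : ℝ → ℝ} {a b : ℝ} (hf : ContinuousOn f (Icc a b)) :
    ContinuousOn (fun x => f (x + 1) - f x) (Icc a (b - 1)) := by
  refine (hf.comp (continuous_add_const 1).continuousOn ?_).sub (hf.mono ?_)
  · exact fun x hx => ⟨by linarith [hx.1], by linarith [hx.2]⟩
  · exact Icc_subset_Icc_right (by linarith)

theorem sum_range_sub_shift_one (f : ℝ → ℝ) (n : ℕ) :
    ∑ k ∈ range n, (f ((k : ℝ) + 1) - f k) = f n - f 0 := by
  simpa using sum_range_sub (fun k : ℕ => f k) n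

theorem average_pace (n : ℕ) (hn : 0 < n) (f : ℝ → ℝ)
    (hf : ContinuousOn f (Set.Icc 0 (n : ℝ)))
    (h0 : f 0 = 0) (hn' : f (n : ℝ) = (n : ℝ)) :
    ∃ x ∈ Set.Icc (0 : ℝ) ((n : ℝ) - 1), f (x + 1) - f x = 1 := by
  have hsum : ∑ k ∈ range n, (f ((k : ℝ) + 1) - f k - 1) = 0 := by
    rw [sum_sub_distrib, sum_range_sub_shift_one, h0, hn']
    simp
  have hmem : ∀ k ∈ range n, (k : ℝ) ∈ Icc (0 : ℝ) (n - 1) := fun k hk =>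
    ⟨k.cast_nonneg, by
      have : (k : ℝ) + 1 ≤ n := by exact_mod_cast mem_range.mp hk
      linarith⟩
  obtain ⟨x, hx, hgx⟩ := isPreconnected_Icc.exists_eq_zero_of_sum_eq_zero
    (hf.sub_shift_one.sub continuousOn_const) (nonempty_range_iff.mpr hn.ne') hmem hsum
  exact ⟨x, hx, sub_eq_zero.mp hgx⟩
end

section
/- Let L > 0, let m be a positive integer, and let f : [0, L] → ℝ be continuous with f(0) = f(L). Then there exists x ∈ [0, L - L/m] with f(x + L/m) = f(x). -/
/-!
Put `c = L / m` and `g x = f (x + c) - f x`. The values of `g` at `0, c, …, (m - 1) c` telescope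
to `f L - f 0 = 0`, so one of them is `≤ 0` and another is `≥ 0`, and the intermediate value
theorem gives a zero of `g` between them.
-/

open Set Finset

theorem Finset.sum_range_sub_arith {R M : Type*} [Semiring R] [AddCommGroup M] (f : R → M)
    (a c : R) (m : ℕ) :
    ∑ k ∈ range m, (f (a + k * c + c) - f (a + k * c)) = f (a + m * c) - f a := by
  simpa [add_one_mul, add_assoc] using sum_range_sub (fun k : ℕ => f (a + k * c)) m

theorem ContinuousOn.exists_horizontal_chord {f : ℝ → ℝ} {a c : ℝ} {m : ℕ} (hm : 0 < m)
    (hc : 0 ≤ c) (hf : ContinuousOn f (Icc a (a + m * c))) (hend : f (a + m * c) = f a) :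
    ∃ x ∈ Icc a (a + (m - 1 : ℝ) * c), f (x + c) = f x := by
  set g : ℝ → ℝ := fun x => f (x + c) - f x
  have hsample : ∀ k < m, a + k * c ∈ Icc a (a + (m - 1 : ℝ) * c) := fun k hk => by
    have : (k : ℝ) ≤ m - 1 := by
      rw [le_sub_iff_add_le]
      exact_mod_cast hk
    constructor <;> nlinarith
  have hg : ContinuousOn g (Icc a (a + (m - 1 : ℝ) * c)) := by
    refine (hf.comp (continuous_add_const c).continuousOn fun x hx => ?_).sub
      (hf.mono fun x hx => ?_) <;>
    constructor <;> linarith [hx.1, hx.2]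
  have hsum : ∑ k ∈ range m, g (a + k * c) = 0 := by
    rw [sum_range_sub_arith, hend, sub_self]
  have hne : (range m).Nonempty := nonempty_range_iff.2 hm.ne'
  obtain ⟨i, hi, hgi⟩ := exists_le_of_sum_le hne (f := fun k : ℕ => g (a + k * c)) (g := 0)
    (by simp [hsum])
  obtain ⟨j, hj, hgj⟩ := exists_le_of_sum_le hne (f := 0) (g := fun k : ℕ => g (a + k * c))
    (by simp [hsum])
  obtain ⟨x, hx, hgx⟩ := isPreconnected_Icc.intermediate_value (hsample i (mem_range.1 hi))
    (hsample j (mem_range.1 hj)) hg ⟨hgi, hgj⟩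
  exact ⟨x, hx, sub_eq_zero.1 hgx⟩

theorem universal_chord (L : ℝ) (hL : 0 < L) (m : ℕ) (hm : 0 < m) (f : ℝ → ℝ)
    (hf : ContinuousOn f (Set.Icc 0 L)) (hend : f 0 = f L) :
    ∃ x ∈ Set.Icc (0 : ℝ) (L - L / m), f (x + L / m) = f x := by
  have hm' : (m : ℝ) ≠ 0 := by positivity
  have hmL : (m : ℝ) * (L / m) = L := mul_div_cancel₀ L hm'
  obtain ⟨x, hx, hfx⟩ := ContinuousOn.exists_horizontal_chord (f := f) (a := 0) (c := L / m) hm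
    (div_pos hL (by positivity)).le (by rwa [zero_add, hmL]) (by rw [zero_add, hmL, hend])
  refine ⟨x, ?_, hfx⟩
  convert hx using 2
  field_simp
  ring
end

section
/- For every real L > 1 with L not an integer, there exists a continuous function f : [0, L] → ℝ with f(0) = f(L) = 0 such that for all x ∈ [0, L-1], f(x+1) ≠ f(x). -/
/-! Take a continuous 1-periodic `g` with `g 0 = 0` and `g L ≠ 0`, e.g. `g x = sin² (π x)`.
Then `f x = g x - x g(L) / L` vanishes at `0` and `L`, while `f (x + 1) - f x = -g(L) / L` is a
nonzero constant, so `f` has no horizontal chord of length 1 anywhere. -/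

open Real

theorem Function.Periodic.exists_sub_linear_no_unit_chord {g : ℝ → ℝ} (hg : Continuous g)
    (hper : Function.Periodic g 1) (h0 : g 0 = 0) {L : ℝ} (hL : g L ≠ 0) :
    ∃ f : ℝ → ℝ, Continuous f ∧ f 0 = 0 ∧ f L = 0 ∧ ∀ x, f (x + 1) ≠ f x := by
  have hL0 : L ≠ 0 := by rintro rfl; exact hL h0
  refine ⟨fun x => g x - x * (g L / L), by fun_prop, by simp [h0], by field_simp; ring, ?_⟩
  intro x hx
  have : g L / L = 0 := by simp only [hper x] at hx; linarith
  exact hL ((div_eq_zero_iff.mp this).resolve_right hL0)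

theorem Real.sin_sq_pi_mul_periodic : Function.Periodic (fun x : ℝ => sin (π * x) ^ 2) 1 :=
  fun x => by simp only [mul_add, mul_one, sin_add_pi, neg_sq]

theorem Real.sin_pi_mul_ne_zero {x : ℝ} (hx : ∀ n : ℤ, x ≠ n) : sin (π * x) ≠ 0 := by
  rw [Ne, sin_eq_zero_iff]
  rintro ⟨n, hn⟩
  exact hx n (mul_left_cancel₀ pi_ne_zero (by rw [← hn, mul_comm]))

theorem universal_chord_negative_general (L : ℝ) (hnotint : ∀ n : ℤ, L ≠ n) :
    ∃ f : ℝ → ℝ, ContinuousOn f (Set.Icc 0 L) ∧ f 0 = 0 ∧ f L = 0 ∧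
      ∀ x ∈ Set.Icc (0 : ℝ) (L - 1), f (x + 1) ≠ f x := by
  obtain ⟨f, hf, hf0, hfL, hchord⟩ :=
    sin_sq_pi_mul_periodic.exists_sub_linear_no_unit_chord (by fun_prop) (by simp)
      (pow_ne_zero 2 (Real.sin_pi_mul_ne_zero hnotint))
  exact ⟨f, hf.continuousOn, hf0, hfL, fun x _ => hchord x⟩

theorem universal_chord_negative (L : ℝ) (hL : 1 < L) (hnotint : ∀ n : ℤ, L ≠ n) :
    ∃ f : ℝ → ℝ, ContinuousOn f (Set.Icc 0 L) ∧ f 0 = 0 ∧ f L = 0 ∧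
      ∀ x ∈ Set.Icc (0 : ℝ) (L - 1), f (x + 1) ≠ f x :=
  universal_chord_negative_general L hnotint
end

section
/- Let L > 0 and let h ∈ (0, L) be such that h ≠ L/m for every positive integer m. Define φ(x) = sin²(πx/h) and f(x) = φ(x) - (x/L)·φ(L). Then f is continuous (indeed smooth), f(0) = f(L) = 0, and f(x + h) ≠ f(x) for all x ∈ [0, L - h]. -/
theorem levy_counterexample (L h : ℝ) (hL : 0 < L) (hh : 0 < h) (hhL : h < L)
    (hnot : ∀ m : ℕ, 0 < m → h ≠ L / m)
    (φ f : ℝ → ℝ)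
    (hφ : φ = fun x => Real.sin (Real.pi * x / h) ^ 2)
    (hf : f = fun x => φ x - (x / L) * φ L) :
    Continuous f ∧ ContDiff ℝ (⊤ : ℕ∞) f ∧ f 0 = 0 ∧ f L = 0 ∧
      ∀ x ∈ Set.Icc (0 : ℝ) (L - h), f (x + h) ≠ f x := by
  have hφcd : ContDiff ℝ (⊤ : ℕ∞) φ := by
    rw [hφ]
    exact (Real.contDiff_sin.comp (contDiff_const.mul contDiff_id |>.div_const h)).pow 2
  have hfcd : ContDiff ℝ (⊤ : ℕ∞) f := by
    rw [hf]
    exact hφcd.sub ((contDiff_id.div_const L).mul contDiff_const)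
  -- periodicity
  have hper : ∀ x, φ (x + h) = φ x := by
    intro x
    rw [hφ]
    simp only
    have : Real.pi * (x + h) / h = Real.pi * x / h + Real.pi := by
      field_simp
    rw [this, Real.sin_add_pi]
    ring
  -- φ L ≠ 0
  have hsin : Real.sin (Real.pi * L / h) ≠ 0 := by
    intro hs
    rw [Real.sin_eq_zero_iff] at hs
    obtain ⟨n, hn⟩ := hs
    have hLh : L / h = (n : ℝ) := by
      have hπ := Real.pi_pos.ne'
      field_simp at hn ⊢
      nlinarith [Real.pi_pos]
    have hn1 : 1 < (n : ℝ) := by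
      rw [← hLh]
      rw [lt_div_iff₀ hh]; linarith
    have hnpos : 0 < n := by exact_mod_cast (by linarith : (0:ℝ) < n)
    have := hnot n.toNat (by omega)
    apply this
    have hcast : ((n.toNat : ℕ) : ℝ) = (n : ℝ) := by
      exact_mod_cast congrArg Int.cast (Int.toNat_of_nonneg hnpos.le)
    rw [hcast, ← hLh]
    field_simp
  have hφL : φ L ≠ 0 := by
    rw [hφ]; simpa using pow_ne_zero 2 hsin
  refine ⟨hfcd.continuous, hfcd, ?_, ?_, ?_⟩
  · rw [hf, hφ]; simp
  · rw [hf]; simp [div_self hL.ne']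
  · intro x _ hx
    rw [hf] at hx
    simp only at hx
    rw [hper x] at hx
    have : (x + h) / L * φ L = x / L * φ L := by linarith
    have h2 : h / L * φ L = 0 := by
      have : (x + h) / L - x / L = h / L := by field_simp; ring
      rw [← this, sub_mul]; linarith
    rcases mul_eq_zero.1 h2 with h3 | h3
    · exact absurd h3 (div_ne_zero hh.ne' hL.ne')
    · exact hφL h3
end

section
/- Let K ⊆ ℝ² be a nonempty compact connected set, and define S*(K) = { s > 0 : ∀ p ∈ K, p + (s, 0) ∉ K }. Then S*(K) is additive: if a ∈ S*(K) and b ∈ S*(K), then a + b ∈ S*(K). -/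
/-!
Suppose `p` and `p + (a + b, 0)` lie in `K`. Then `K ∪ (K + (a + b, 0))` is a continuum joining the
leftmost point of `K` to the rightmost point of `K + (a + b, 0)` within the horizontal strip spanned
by `K`, while `K + (a, 0)` joins its lowest to its highest point within the vertical strip between
those two points. Two such continua must meet, and a common point gives a point of
`K ∩ (K + (a, 0))` or of `K ∩ (K + (b, 0))`.

The crossing of the two continua is proved on a grid finer than their distance: they give two grid
paths, and the signed number of crossings of the first path with the downward vertical ray below a
cell is `0` at the start of the second path, `1` at its end, and unchanged along each step of the
second path that avoids the first.
-/

open SimpleGraph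

theorem SimpleGraph.Walk.sum_darts_map_eq_add_sub {V M : Type*} [AddCommGroup M]
    {G : SimpleGraph V} (f g : V → V → M) (ψ : V → M) {u v : V} (w : G.Walk u v)
    (h : ∀ d ∈ w.darts, f d.fst d.snd = g d.fst d.snd + (ψ d.fst - ψ d.snd)) :
    (w.darts.map fun d => f d.fst d.snd).sum =
      (w.darts.map fun d => g d.fst d.snd).sum + (ψ u - ψ v) := by
  induction w with
  | nil => simp
  | cons hadj p ih =>
    simp only [Walk.darts_cons, List.mem_cons, forall_eq_or_imp] at h
    simp only [Walk.darts_cons, List.map_cons, List.sum_cons, h.1, ih h.2]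
    abel

theorem SimpleGraph.exists_walk_of_adj_or_eq {V : Type*} {G : SimpleGraph V} {a b : V}
    (h : G.Adj a b ∨ a = b) : ∃ w : G.Walk a b, ∀ c ∈ w.support, c = a ∨ c = b := by
  rcases h with h | rfl
  · exact ⟨h.toWalk, by simp⟩
  · exact ⟨.nil, by simp⟩

theorem floor_div_le_floor_div_add_one {h a b : ℝ} (hh : 0 < h) (hab : a < b + h) :
    ⌊a / h⌋ ≤ ⌊b / h⌋ + 1 := by
  rw [← Int.floor_add_one]
  refine Int.floor_le_floor ?_
  rw [div_add_one hh.ne']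
  exact div_le_div_of_nonneg_right hab.le hh.le

noncomputable section

def intGrid : SimpleGraph (ℤ × ℤ) := hasse ℤ □ hasse ℤ

theorem intGrid_adj {x y : ℤ × ℤ} :
    intGrid.Adj x y ↔ (x.2 = y.2 ∧ (y.1 = x.1 + 1 ∨ x.1 = y.1 + 1)) ∨
      (x.1 = y.1 ∧ (y.2 = x.2 + 1 ∨ x.2 = y.2 + 1)) := by
  simp only [intGrid, boxProd_adj, hasse_adj, Order.covBy_iff_add_one_eq]
  omega

namespace IntGrid

/-- The signed number of crossings of the step `u → v` with the ray going down from the edge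
between the cells `t` and `t + (1, 0)`. -/
def rayCrossing (t u v : ℤ × ℤ) : ℤ :=
  if u.2 = v.2 ∧ u.2 ≤ t.2 then (if u.1 ≤ t.1 then 1 else 0) - (if v.1 ≤ t.1 then 1 else 0)
  else 0

def crossingNumber (t : ℤ × ℤ) {u v : ℤ × ℤ} (γ : intGrid.Walk u v) : ℤ :=
  (γ.darts.map fun d => rayCrossing t d.fst d.snd).sum

section

variable {u v : ℤ × ℤ} (γ : intGrid.Walk u v)

theorem crossingNumber_right {t : ℤ × ℤ} (ht : (t.1 + 1, t.2) ∉ γ.support) (hu : u.1 ≤ t.1)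
    (hv : t.1 + 1 < v.1) : crossingNumber (t.1 + 1, t.2) γ = crossingNumber t γ := by
  -- The two rays differ by the boundary of the half-column below `(t.1 + 1, t.2)`.
  let ψ : ℤ × ℤ → ℤ := fun w => if w.1 = t.1 + 1 ∧ w.2 ≤ t.2 then 1 else 0
  have step : ∀ d ∈ γ.darts, rayCrossing (t.1 + 1, t.2) d.fst d.snd =
      rayCrossing t d.fst d.snd + (ψ d.fst - ψ d.snd) := by
    intro d hd
    have hadj := intGrid_adj.mp d.adj
    have hfst : d.fst ≠ (t.1 + 1, t.2) := fun h => ht (h ▸ γ.dart_fst_mem_support_of_mem_darts hd)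
    have hsnd : d.snd ≠ (t.1 + 1, t.2) := fun h => ht (h ▸ γ.dart_snd_mem_support_of_mem_darts hd)
    simp only [ne_eq, Prod.ext_iff] at hfst hsnd
    simp only [rayCrossing, ψ]
    split_ifs <;> omega
  have hψu : ψ u = 0 := if_neg (by omega)
  have hψv : ψ v = 0 := if_neg (by omega)
  rw [crossingNumber, crossingNumber, γ.sum_darts_map_eq_add_sub _ _ ψ step, hψu, hψv]
  simp

theorem crossingNumber_up {t : ℤ × ℤ} (ht : (t.1, t.2 + 1) ∉ γ.support) :
    crossingNumber (t.1, t.2 + 1) γ = crossingNumber t γ := by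
  refine congrArg List.sum (List.map_congr_left fun d hd => ?_)
  have hadj := intGrid_adj.mp d.adj
  have hfst : d.fst ≠ (t.1, t.2 + 1) := fun h => ht (h ▸ γ.dart_fst_mem_support_of_mem_darts hd)
  have hsnd : d.snd ≠ (t.1, t.2 + 1) := fun h => ht (h ▸ γ.dart_snd_mem_support_of_mem_darts hd)
  simp only [ne_eq, Prod.ext_iff] at hfst hsnd
  simp only [rayCrossing]
  split_ifs <;> omega

theorem crossingNumber_eq_zero {t : ℤ × ℤ} (ht : t ∉ γ.support)
    (hγ : ∀ c ∈ γ.support, t.2 ≤ c.2) : crossingNumber t γ = 0 := by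
  refine List.sum_eq_zero fun x hx => ?_
  obtain ⟨d, hd, rfl⟩ := List.mem_map.mp hx
  have hadj := intGrid_adj.mp d.adj
  have hfst : d.fst ≠ t := fun h => ht (h ▸ γ.dart_fst_mem_support_of_mem_darts hd)
  have hsnd : d.snd ≠ t := fun h => ht (h ▸ γ.dart_snd_mem_support_of_mem_darts hd)
  have hrow := hγ _ (γ.dart_fst_mem_support_of_mem_darts hd)
  simp only [ne_eq, Prod.ext_iff] at hfst hsnd
  simp only [rayCrossing]
  split_ifs <;> omega

theorem crossingNumber_eq_one {t : ℤ × ℤ} (hγ : ∀ c ∈ γ.support, c.2 ≤ t.2) (hu : u.1 ≤ t.1)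
    (hv : t.1 < v.1) : crossingNumber t γ = 1 := by
  let ψ : ℤ × ℤ → ℤ := fun w => if w.1 ≤ t.1 then 1 else 0
  have step : ∀ d ∈ γ.darts, rayCrossing t d.fst d.snd = 0 + (ψ d.fst - ψ d.snd) := by
    intro d hd
    have hadj := intGrid_adj.mp d.adj
    have hrow := hγ _ (γ.dart_fst_mem_support_of_mem_darts hd)
    simp only [rayCrossing, ψ]
    split_ifs <;> omega
  have hψu : ψ u = 1 := if_pos hu
  have hψv : ψ v = 0 := if_neg (by omega)
  rw [crossingNumber, γ.sum_darts_map_eq_add_sub _ (fun _ _ => 0) ψ step, hψu, hψv]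
  simp

theorem crossingNumber_eq_of_adj {t t' : ℤ × ℤ} (h : intGrid.Adj t t') (ht : t ∉ γ.support)
    (ht' : t' ∉ γ.support) (hut : u.1 ≤ t.1) (htv : t.1 < v.1) (hut' : u.1 ≤ t'.1)
    (htv' : t'.1 < v.1) : crossingNumber t γ = crossingNumber t' γ := by
  rcases intGrid_adj.mp h with ⟨h2, h1 | h1⟩ | ⟨h1, h2 | h2⟩
  · obtain rfl : t' = (t.1 + 1, t.2) := Prod.ext h1 h2.symm
    exact (crossingNumber_right γ ht' hut htv').symm
  · obtain rfl : t = (t'.1 + 1, t'.2) := Prod.ext h1 h2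
    exact crossingNumber_right γ ht hut' htv
  · obtain rfl : t' = (t.1, t.2 + 1) := Prod.ext h1.symm h2
    exact (crossingNumber_up γ ht').symm
  · obtain rfl : t = (t'.1, t'.2 + 1) := Prod.ext h1 h2
    exact crossingNumber_up γ ht

theorem crossingNumber_eq_of_walk {s t : ℤ × ℤ} (τ : intGrid.Walk s t)
    (hτ : ∀ c ∈ τ.support, c ∉ γ.support ∧ u.1 ≤ c.1 ∧ c.1 < v.1) :
    crossingNumber s γ = crossingNumber t γ := by
  induction τ with
  | nil => rfl
  | cons h τ ih =>
    simp only [Walk.support_cons, List.mem_cons, forall_eq_or_imp] at hτ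
    have hnext := hτ.2 _ τ.start_mem_support
    exact (crossingNumber_eq_of_adj γ h hτ.1.1 hnext.1 hτ.1.2.1 hτ.1.2.2 hnext.2.1 hnext.2.2).trans
      (ih hτ.2)

theorem exists_mem_support_of_lt {s t : ℤ × ℤ} (τ : intGrid.Walk s t)
    (hγ : ∀ c ∈ γ.support, s.2 ≤ c.2 ∧ c.2 ≤ t.2) (hτ : ∀ c ∈ τ.support, u.1 ≤ c.1 ∧ c.1 < v.1) :
    ∃ c ∈ γ.support, c ∈ τ.support := by
  by_contra! hdisj
  have hs := hτ s τ.start_mem_support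
  have ht := hτ t τ.end_mem_support
  have h0 := crossingNumber_eq_zero γ (fun h => hdisj s h τ.start_mem_support)
    (fun c hc => (hγ c hc).1)
  have h1 := crossingNumber_eq_one γ (fun c hc => (hγ c hc).2) ht.1 ht.2
  have := crossingNumber_eq_of_walk γ τ fun c hc => ⟨fun h => hdisj c h hc, hτ c hc⟩
  omega

theorem exists_mem_support {s t : ℤ × ℤ} (τ : intGrid.Walk s t)
    (hγ : ∀ c ∈ γ.support, s.2 ≤ c.2 ∧ c.2 ≤ t.2) (hτ : ∀ c ∈ τ.support, u.1 ≤ c.1 ∧ c.1 ≤ v.1) :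
    ∃ c ∈ γ.support, c ∈ τ.support := by
  -- Extending `γ` by one cell to the right of `v` puts `τ` strictly to the left of its end.
  have hadj : intGrid.Adj v (v.1 + 1, v.2) := intGrid_adj.mpr (by omega)
  obtain ⟨c, hcγ, hcτ⟩ := exists_mem_support_of_lt (γ.concat hadj) τ
    (fun c hc => by
      rw [Walk.support_concat, List.mem_append, List.mem_singleton] at hc
      rcases hc with hc | rfl
      exacts [hγ c hc, hγ v γ.end_mem_support])
    (fun c hc => ⟨(hτ c hc).1, Int.lt_add_one_iff.mpr (hτ c hc).2⟩)
  rw [Walk.support_concat, List.mem_append, List.mem_singleton] at hcγ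
  rcases hcγ with hcγ | rfl
  · exact ⟨c, hcγ, hcτ⟩
  · exact absurd (hτ _ hcτ).2 (not_le.mpr (lt_add_one v.1))

end

def cellOf (h : ℝ) (z : ℝ × ℝ) : ℤ × ℤ := (⌊z.1 / h⌋, ⌊z.2 / h⌋)

/-- The corners of the L-shaped grid paths joining the cells of points of `X` at distance less than
`h`. Unlike a thickening, this set stays within the rows and columns of the cells of `X`. -/
def cornerCells (h : ℝ) (X : Set (ℝ × ℝ)) : Set (ℤ × ℤ) :=
  {c | ∃ x ∈ X, ∃ y ∈ X, dist x y < h ∧ c = (⌊y.1 / h⌋, ⌊x.2 / h⌋)}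

theorem exists_walk_cellOf_of_dist_lt {h : ℝ} (hh : 0 < h) {X : Set (ℝ × ℝ)} {x y : ℝ × ℝ}
    (hx : x ∈ X) (hy : y ∈ X) (hxy : dist x y < h) :
    ∃ w : intGrid.Walk (cellOf h x) (cellOf h y), ∀ c ∈ w.support, c ∈ cornerCells h X := by
  have h1 : |x.1 - y.1| < h := (le_max_left _ _).trans_lt hxy
  have h2 : |x.2 - y.2| < h := (le_max_right _ _).trans_lt hxy
  rw [abs_lt] at h1 h2
  have mem : ∀ {x' y'}, x' ∈ X → y' ∈ X → dist x' y' < h →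
      ((⌊y'.1 / h⌋, ⌊x'.2 / h⌋) : ℤ × ℤ) ∈ cornerCells h X :=
    fun hx' hy' hd => ⟨_, hx', _, hy', hd, rfl⟩
  have hxx : dist x x < h := by simpa using hh
  have hyy : dist y y < h := by simpa using hh
  obtain ⟨w₁, hw₁⟩ := exists_walk_of_adj_or_eq (G := intGrid)
    (a := cellOf h x) (b := (⌊y.1 / h⌋, ⌊x.2 / h⌋)) <| by
      have := floor_div_le_floor_div_add_one hh (a := x.1) (b := y.1) (by linarith)
      have := floor_div_le_floor_div_add_one hh (a := y.1) (b := x.1) (by linarith)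
      rw [intGrid_adj, cellOf, Prod.ext_iff]
      omega
  obtain ⟨w₂, hw₂⟩ := exists_walk_of_adj_or_eq (G := intGrid)
    (a := (⌊y.1 / h⌋, ⌊x.2 / h⌋)) (b := cellOf h y) <| by
      have := floor_div_le_floor_div_add_one hh (a := x.2) (b := y.2) (by linarith)
      have := floor_div_le_floor_div_add_one hh (a := y.2) (b := x.2) (by linarith)
      rw [intGrid_adj, cellOf, Prod.ext_iff]
      omega
  refine ⟨w₁.append w₂, fun c hc => ?_⟩
  rcases (Walk.mem_support_append_iff _ _).mp hc with hc | hc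
  · rcases hw₁ c hc with rfl | rfl
    exacts [mem hx hx hxx, mem hx hy hxy]
  · rcases hw₂ c hc with rfl | rfl
    exacts [mem hx hy hxy, mem hy hy hyy]

theorem exists_walk_cellOf {h : ℝ} (hh : 0 < h) {X : Set (ℝ × ℝ)} (hX : IsPreconnected X)
    {x y : ℝ × ℝ} (hx : x ∈ X) (hy : y ∈ X) :
    ∃ w : intGrid.Walk (cellOf h x) (cellOf h y), ∀ c ∈ w.support, c ∈ cornerCells h X := by
  refine hX.induction₂ (fun x y => ∃ w : intGrid.Walk (cellOf h x) (cellOf h y),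
      ∀ c ∈ w.support, c ∈ cornerCells h X) (fun x hx => ?_) ?_ ?_ hx hy
  · filter_upwards [inter_mem_nhdsWithin X (Metric.ball_mem_nhds x hh), self_mem_nhdsWithin]
      with y hy hyX
    exact exists_walk_cellOf_of_dist_lt hh hx hyX (Metric.mem_ball'.mp hy.2)
  · rintro x y z - - - ⟨w₁, hw₁⟩ ⟨w₂, hw₂⟩
    refine ⟨w₁.append w₂, fun c hc => ?_⟩
    rcases (Walk.mem_support_append_iff _ _).mp hc with hc | hc
    exacts [hw₁ c hc, hw₂ c hc]
  · rintro x y - - ⟨w, hw⟩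
    exact ⟨w.reverse, fun c hc => hw c (by rwa [Walk.support_reverse, List.mem_reverse] at hc)⟩

theorem exists_dist_lt_of_mem_cornerCells {h : ℝ} (hh : 0 < h) {A B : Set (ℝ × ℝ)} {c : ℤ × ℤ}
    (hA : c ∈ cornerCells h A) (hB : c ∈ cornerCells h B) : ∃ a ∈ A, ∃ b ∈ B, dist a b < 3 * h := by
  obtain ⟨x, hx, y, hy, hxy, rfl⟩ := hA
  obtain ⟨x', hx', y', hy', hxy', hc⟩ := hB
  rw [Prod.ext_iff] at hc
  have hy1 := Int.abs_sub_lt_one_of_floor_eq_floor hc.1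
  have hx2 := Int.abs_sub_lt_one_of_floor_eq_floor hc.2
  rw [← sub_div, abs_div, abs_of_pos hh, div_lt_one hh] at hy1 hx2
  have d1 : |x.1 - y.1| < h := (le_max_left _ _).trans_lt hxy
  have d1' : |x'.1 - y'.1| < h := (le_max_left _ _).trans_lt hxy'
  rw [abs_lt] at hy1 hx2 d1 d1'
  refine ⟨x, hx, x', hx', max_lt ?_ ?_⟩ <;> rw [Real.dist_eq, abs_lt] <;> constructor <;> linarith

theorem cornerCells_snd_bounds {h : ℝ} (hh : 0 < h) {X : Set (ℝ × ℝ)} {lo hi : ℝ}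
    (hX : ∀ x ∈ X, lo ≤ x.2 ∧ x.2 ≤ hi) {c : ℤ × ℤ} (hc : c ∈ cornerCells h X) :
    ⌊lo / h⌋ ≤ c.2 ∧ c.2 ≤ ⌊hi / h⌋ := by
  obtain ⟨x, hx, -, -, -, rfl⟩ := hc
  exact ⟨Int.floor_le_floor (div_le_div_of_nonneg_right (hX x hx).1 hh.le),
    Int.floor_le_floor (div_le_div_of_nonneg_right (hX x hx).2 hh.le)⟩

theorem cornerCells_fst_bounds {h : ℝ} (hh : 0 < h) {X : Set (ℝ × ℝ)} {lo hi : ℝ}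
    (hX : ∀ x ∈ X, lo ≤ x.1 ∧ x.1 ≤ hi) {c : ℤ × ℤ} (hc : c ∈ cornerCells h X) :
    ⌊lo / h⌋ ≤ c.1 ∧ c.1 ≤ ⌊hi / h⌋ := by
  obtain ⟨-, -, y, hy, -, rfl⟩ := hc
  exact ⟨Int.floor_le_floor (div_le_div_of_nonneg_right (hX y hy).1 hh.le),
    Int.floor_le_floor (div_le_div_of_nonneg_right (hX y hy).2 hh.le)⟩

end IntGrid

open IntGrid

theorem inter_nonempty_of_crossing {A B : Set (ℝ × ℝ)} (hA : IsCompact A) (hB : IsClosed B)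
    (hAc : IsPreconnected A) (hBc : IsPreconnected B) {zl zr zb zt : ℝ × ℝ}
    (hzl : zl ∈ A) (hzr : zr ∈ A) (hzb : zb ∈ B) (hzt : zt ∈ B)
    (hAy : ∀ z ∈ A, zb.2 ≤ z.2 ∧ z.2 ≤ zt.2) (hBx : ∀ z ∈ B, zl.1 ≤ z.1 ∧ z.1 ≤ zr.1) :
    (A ∩ B).Nonempty := by
  by_contra hAB
  obtain ⟨r, hr, hgap⟩ := Metric.exists_pos_forall_lt_edist hA hB
    (Set.disjoint_iff_inter_eq_empty.mpr (Set.not_nonempty_iff_eq_empty.mp hAB))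
  have hh : (0 : ℝ) < r / 3 := by positivity
  obtain ⟨γ, hγ⟩ := exists_walk_cellOf hh hAc hzl hzr
  obtain ⟨τ, hτ⟩ := exists_walk_cellOf hh hBc hzb hzt
  obtain ⟨c, hcγ, hcτ⟩ := exists_mem_support γ τ
    (fun c hc => cornerCells_snd_bounds hh hAy (hγ c hc))
    (fun c hc => cornerCells_fst_bounds hh hBx (hτ c hc))
  obtain ⟨a, ha, b, hb, hab⟩ := exists_dist_lt_of_mem_cornerCells hh (hγ c hcγ) (hτ c hcτ)
  have hlt : (r : ℝ) < dist a b := by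
    have := hgap a ha b hb
    rw [edist_dist, ← ENNReal.ofReal_coe_nnreal, ENNReal.ofReal_lt_ofReal_iff'] at this
    exact this.1
  linarith

theorem inter_translate_nonempty_of_le {K : Set (ℝ × ℝ)} (hK : IsCompact K) (hKc : IsPreconnected K)
    {a c : ℝ} (ha : 0 ≤ a) (hac : a ≤ c) (hc : (K ∩ (· + (c, 0)) '' K).Nonempty) :
    ((K ∪ (· + (c, 0)) '' K) ∩ (· + (a, 0)) '' K).Nonempty := by
  have hne : K.Nonempty := hc.mono Set.inter_subset_left
  obtain ⟨l, hl, hlmin⟩ := hK.exists_isMinOn hne continuous_fst.continuousOn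
  obtain ⟨r, hr, hrmax⟩ := hK.exists_isMaxOn hne continuous_fst.continuousOn
  obtain ⟨b, hb, hbmin⟩ := hK.exists_isMinOn hne continuous_snd.continuousOn
  obtain ⟨t, ht, htmax⟩ := hK.exists_isMaxOn hne continuous_snd.continuousOn
  obtain ⟨z, hzK, hzc⟩ := hc
  refine inter_nonempty_of_crossing (zl := l) (zr := r + (c, 0)) (zb := b + (a, 0))
    (zt := t + (a, 0)) (hK.union (hK.image (continuous_add_const _)))
    (hK.image (continuous_add_const _)).isClosed
    (hKc.union z hzK hzc (hKc.image _ (continuous_add_const _).continuousOn))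
    (hKc.image _ (continuous_add_const _).continuousOn)
    (Or.inl hl) (Or.inr ⟨r, hr, rfl⟩) ⟨b, hb, rfl⟩ ⟨t, ht, rfl⟩ ?_ ?_
  · rintro z (hz | ⟨k, hk, rfl⟩)
    · simpa using ⟨hbmin hz, htmax hz⟩
    · simpa using ⟨hbmin hk, htmax hk⟩
  · rintro z ⟨k, hk, rfl⟩
    have hlk : l.1 ≤ k.1 := hlmin hk
    have hkr : k.1 ≤ r.1 := hrmax hk
    simp only [Prod.fst_add]
    constructor <;> linarith

end

theorem hopf_theorem_I_general (K : Set (ℝ × ℝ)) (hcomp : IsCompact K)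
    (hconn : IsConnected K) (a b : ℝ)
    (ha : a ∈ {s : ℝ | 0 < s ∧ ∀ p ∈ K, p + (s, 0) ∉ K})
    (hb : b ∈ {s : ℝ | 0 < s ∧ ∀ p ∈ K, p + (s, 0) ∉ K}) :
    a + b ∈ {s : ℝ | 0 < s ∧ ∀ p ∈ K, p + (s, 0) ∉ K} := by
  obtain ⟨ha0, haK⟩ := ha
  obtain ⟨hb0, hbK⟩ := hb
  refine ⟨add_pos ha0 hb0, fun p hp hpab => ?_⟩
  obtain ⟨_, hz, k, hk, rfl⟩ := inter_translate_nonempty_of_le hcomp hconn.isPreconnected ha0.le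
    (le_add_of_nonneg_right hb0.le) ⟨_, hpab, p, hp, rfl⟩
  rcases hz with hz | ⟨k', hk', hk'k⟩
  · exact haK k hk hz
  · have hk'b : k' + (b, 0) = k := by
      rw [Prod.ext_iff] at hk'k ⊢
      simp only [Prod.fst_add, Prod.snd_add] at hk'k ⊢
      constructor <;> linarith
    exact hbK k' hk' (hk'b ▸ hk)

theorem hopf_theorem_I (K : Set (ℝ × ℝ)) (hne : K.Nonempty) (hcomp : IsCompact K)
    (hconn : IsConnected K) (a b : ℝ)
    (ha : a ∈ {s : ℝ | 0 < s ∧ ∀ p ∈ K, p + (s, 0) ∉ K})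
    (hb : b ∈ {s : ℝ | 0 < s ∧ ∀ p ∈ K, p + (s, 0) ∉ K}) :
    a + b ∈ {s : ℝ | 0 < s ∧ ∀ p ∈ K, p + (s, 0) ∉ K} :=
  hopf_theorem_I_general K hcomp hconn a b ha hb
end

section
/- Let f : [0, L] → ℝ be continuous, and define S* = { s > 0 : ∀ x, x ∈ [0, L] → x + s ∈ [0, L] → f(x + s) ≠ f(x) }. Then S* is additive: a ∈ S* and b ∈ S* imply a + b ∈ S*. -/
/-!
If no chord has length `s`, the continuous function `t ↦ f (t + s) - f t` never vanishes, so by the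
intermediate value theorem it has constant sign. If `a` and `b` give the same sign, then
`f x`, `f (x + b)`, `f (x + b + a)` is strictly monotone, so `f x ≠ f (x + (a + b))`. If they give
opposite signs, a minimum point of `f` on `[x, x + (a + b)]` could be shifted by `+b` or by `-a`
within the interval to a strictly smaller value, which is absurd.
-/

open Set

theorem IsPreconnected.forall_lt_or_forall_gt_of_ne {X α : Type*} [TopologicalSpace X]
    [LinearOrder α] [TopologicalSpace α] [OrderClosedTopology α] {s : Set X} {g : X → α} {c : α}
    (hs : IsPreconnected s) (hg : ContinuousOn g s) (hne : ∀ x ∈ s, g x ≠ c) :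
    (∀ x ∈ s, c < g x) ∨ (∀ x ∈ s, g x < c) := by
  by_contra! ⟨⟨x, hx, hgx⟩, ⟨y, hy, hgy⟩⟩
  obtain ⟨z, hz, hgz⟩ := hs.intermediate_value hx hy hg ⟨hgx, hgy⟩
  exact hne z hz hgz

theorem forall_lt_shift_or_forall_shift_lt {L s : ℝ} {f : ℝ → ℝ} (hf : ContinuousOn f (Icc 0 L))
    (hs : 0 ≤ s) (hchord : ∀ x, x ∈ Icc 0 L → x + s ∈ Icc 0 L → f (x + s) ≠ f x) :
    (∀ t ∈ Icc 0 (L - s), f t < f (t + s)) ∨ (∀ t ∈ Icc 0 (L - s), f (t + s) < f t) := by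
  have hmem : ∀ t ∈ Icc 0 (L - s), t ∈ Icc 0 L ∧ t + s ∈ Icc 0 L := fun t ⟨h0, hL⟩ =>
    ⟨⟨h0, by linarith⟩, ⟨by linarith, by linarith⟩⟩
  have hshift : ContinuousOn (fun t => f (t + s)) (Icc 0 (L - s)) :=
    hf.comp (continuousOn_id.add continuousOn_const) fun t ht => (hmem t ht).2
  have hdiff : ContinuousOn (fun t => f (t + s) - f t) (Icc 0 (L - s)) :=
    hshift.sub (hf.mono fun t ht => (hmem t ht).1)
  refine (isPreconnected_Icc.forall_lt_or_forall_gt_of_ne hdiff (c := 0) fun t ht => ?_).imp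
    (fun h t ht => sub_pos.mp (h t ht)) (fun h t ht => sub_neg.mp (h t ht))
  exact sub_ne_zero.mpr (hchord t (hmem t ht).1 (hmem t ht).2)

theorem not_forall_lt_shift_and_forall_shift_lt {f : ℝ → ℝ} {x a b : ℝ} (ha : 0 ≤ a) (hb : 0 ≤ b)
    (hf : ContinuousOn f (Icc x (x + (a + b))))
    (hA : ∀ t ∈ Icc x (x + b), f t < f (t + a)) (hB : ∀ t ∈ Icc x (x + a), f (t + b) < f t) :
    False := by
  obtain ⟨m, ⟨hxm, hmx⟩, hmin⟩ :=
    isCompact_Icc.exists_isMinOn (nonempty_Icc.mpr (by linarith)) hf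
  rcases le_or_gt m (x + a) with hm | hm
  · have hlt := hB m ⟨hxm, hm⟩
    exact (hmin ⟨by linarith, by linarith⟩).not_gt hlt
  · have hlt := hA (m - a) ⟨by linarith, by linarith⟩
    rw [sub_add_cancel] at hlt
    exact (hmin ⟨by linarith, by linarith⟩).not_gt hlt

theorem hopf_for_graphs (L : ℝ) (f : ℝ → ℝ) (hf : ContinuousOn f (Set.Icc 0 L))
    (a b : ℝ)
    (ha : a ∈ {s : ℝ | 0 < s ∧ ∀ x, x ∈ Set.Icc 0 L → x + s ∈ Set.Icc 0 L → f (x + s) ≠ f x})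
    (hb : b ∈ {s : ℝ | 0 < s ∧ ∀ x, x ∈ Set.Icc 0 L → x + s ∈ Set.Icc 0 L → f (x + s) ≠ f x}) :
    a + b ∈ {s : ℝ | 0 < s ∧ ∀ x, x ∈ Set.Icc 0 L → x + s ∈ Set.Icc 0 L → f (x + s) ≠ f x} := by
  obtain ⟨ha0, hA⟩ := ha
  obtain ⟨hb0, hB⟩ := hb
  refine ⟨add_pos ha0 hb0, fun x ⟨hx0, _⟩ ⟨_, hxL⟩ heq => ?_⟩
  have hf' : ContinuousOn f (Icc x (x + (a + b))) := hf.mono (Icc_subset_Icc hx0 hxL)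
  have hA_on : ∀ t ∈ Icc x (x + b), t ∈ Icc 0 (L - a) := fun t ht =>
    ⟨by linarith [ht.1], by linarith [ht.2]⟩
  have hB_on : ∀ t ∈ Icc x (x + a), t ∈ Icc 0 (L - b) := fun t ht =>
    ⟨by linarith [ht.1], by linarith [ht.2]⟩
  have hx_a : x ∈ Icc x (x + a) := left_mem_Icc.mpr (by linarith)
  have hxb_b : x + b ∈ Icc x (x + b) := right_mem_Icc.mpr (by linarith)
  have heq' : f (x + b + a) = f x := by rwa [add_assoc, add_comm b]
  rcases forall_lt_shift_or_forall_shift_lt hf ha0.le hA with hA' | hA' <;>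
    rcases forall_lt_shift_or_forall_shift_lt hf hb0.le hB with hB' | hB'
  · linarith [hB' x (hB_on x hx_a), hA' (x + b) (hA_on _ hxb_b)]
  · exact not_forall_lt_shift_and_forall_shift_lt ha0.le hb0.le hf'
      (fun t ht => hA' t (hA_on t ht)) (fun t ht => hB' t (hB_on t ht))
  · rw [add_comm a b] at hf'
    exact not_forall_lt_shift_and_forall_shift_lt hb0.le ha0.le hf'
      (fun t ht => hB' t (hB_on t ht)) (fun t ht => hA' t (hA_on t ht))
  · linarith [hB' x (hB_on x hx_a), hA' (x + b) (hA_on _ hxb_b)]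
end

section
/- Let S* ⊆ (0, ∞) be open and additive, and suppose S* is nonempty and S* ≠ (0, ∞). Then the infimum l of S* is positive, i.e., l > 0. -/
/-!
If `inf S* = 0`, then `S*` contains arbitrarily small elements `b`. Around any `a ∈ S*` some
interval `[a, a + δ)` lies in `S*`; choosing `b < δ`, every `y ≥ a` can be written as
`(y - m b) + m b` with `y - m b ∈ [a, a + b)`, so `y ∈ S*`. Hence `S*` contains every `y > 0`.
-/

open Set

theorem add_nsmul_mem_of_add_mem {M : Type*} [AddMonoid M] {S : Set M}
    (hadd : ∀ a ∈ S, ∀ b ∈ S, a + b ∈ S) {b c : M} (hb : b ∈ S) (hc : c ∈ S) (n : ℕ) :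
    c + n • b ∈ S := by
  induction n with
  | zero => simpa using hc
  | succ n ih => simpa [succ_nsmul, add_assoc] using hadd _ ih _ hb

theorem Ici_subset_of_isOpen_of_add_mem {S : Set ℝ} (hopen : IsOpen S)
    (hadd : ∀ a ∈ S, ∀ b ∈ S, a + b ∈ S) (hsmall : ∀ δ > 0, ∃ b ∈ S, 0 < b ∧ b < δ)
    {a : ℝ} (ha : a ∈ S) : Ici a ⊆ S := by
  intro y hy
  obtain ⟨u, hau, hIco⟩ := exists_Ico_subset_of_mem_nhds (hopen.mem_nhds ha) ⟨a + 1, by simp⟩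
  obtain ⟨b, hb, hb0, hbu⟩ := hsmall (u - a) (sub_pos.mpr hau)
  set m : ℕ := ⌊(y - a) / b⌋₊
  have hmb_le : m * b ≤ y - a :=
    (le_div_iff₀ hb0).mp (Nat.floor_le (div_nonneg (sub_nonneg.mpr hy) hb0.le))
  have hmb_gt : y - a < (m + 1) * b := (div_lt_iff₀ hb0).mp (Nat.lt_floor_add_one _)
  have hrem : y - m * b ∈ S := hIco ⟨by linarith, by linarith⟩
  simpa using add_nsmul_mem_of_add_mem hadd hb hrem m

theorem eq_Ioi_of_csInf_eq_zero {S : Set ℝ} (hsub : S ⊆ Ioi 0) (hopen : IsOpen S)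
    (hadd : ∀ a ∈ S, ∀ b ∈ S, a + b ∈ S) (hne : S.Nonempty) (hinf : sInf S = 0) :
    S = Ioi 0 := by
  have hsmall : ∀ δ > 0, ∃ b ∈ S, 0 < b ∧ b < δ := fun δ hδ ↦ by
    obtain ⟨b, hb, hbδ⟩ := exists_lt_of_csInf_lt hne (hinf ▸ hδ)
    exact ⟨b, hb, hsub hb, hbδ⟩
  refine hsub.antisymm fun y hy ↦ ?_
  obtain ⟨a, ha, hay⟩ := exists_lt_of_csInf_lt hne (hinf ▸ hy)
  exact Ici_subset_of_isOpen_of_add_mem hopen hadd hsmall ha hay.le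

theorem inf_pos_of_proper (Sstar : Set ℝ) (hsub : Sstar ⊆ Set.Ioi 0)
    (hopen : IsOpen Sstar) (hadd : ∀ a ∈ Sstar, ∀ b ∈ Sstar, a + b ∈ Sstar)
    (hne : Sstar.Nonempty) (hproper : Sstar ≠ Set.Ioi 0) :
    0 < sInf Sstar := by
  have hnonneg : 0 ≤ sInf Sstar := le_csInf hne fun x hx ↦ (hsub hx).le
  exact hnonneg.lt_of_ne fun hinf ↦
    hproper (eq_Ioi_of_csInf_eq_zero hsub hopen hadd hne hinf.symm)
end

section
/- Let S* ⊆ (0, ∞) be nonempty, open, and additive, and let S = [0, ∞) \ S*. Then S is bounded. -/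
/-!
Pick `s ∈ S*` and a ball `(s - ε, s + ε) ⊆ S*`. Additivity puts `n • y ∈ S*` for every `y` in the
ball and `n ≥ 1`, so it suffices to find, for large `x`, some `n ≥ 1` with `x / n` in the ball.
With `n = ⌈x / s⌉₊` one has `s - s² / x < x / n ≤ s`, so any `x > s² / ε` works.
-/

theorem nsmul_mem_of_add_mem {M : Type*} [AddMonoid M] {S : Set M}
    (hadd : ∀ a ∈ S, ∀ b ∈ S, a + b ∈ S) {a : M} (ha : a ∈ S) {n : ℕ} (hn : 0 < n) :
    n • a ∈ S := by
  induction n, hn using Nat.le_induction with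
  | base => simpa using ha
  | succ n _ ih => simpa [succ_nsmul] using hadd _ ih a ha

theorem exists_div_nat_mem_ball {s ε x : ℝ} (hs : 0 < s) (hx : s ^ 2 / ε < x) (hε : 0 < ε) :
    ∃ n : ℕ, 0 < n ∧ x / n ∈ Metric.ball s ε := by
  have hx0 : 0 < x := (div_pos (pow_pos hs 2) hε).trans hx
  set n := ⌈x / s⌉₊
  have hn : 0 < n := Nat.ceil_pos.2 (div_pos hx0 hs)
  have hn' : (0 : ℝ) < n := Nat.cast_pos.2 hn
  have hle : x / s ≤ n := Nat.le_ceil _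
  have hlt : (n : ℝ) < x / s + 1 := Nat.ceil_lt_add_one (div_pos hx0 hs).le
  have hupper : x / n ≤ s :=
    calc x / n ≤ x / (x / s) := by gcongr
      _ = s := by field_simp
  have hlower : s - x / n < s ^ 2 / x :=
    calc s - x / n = (s * n - x) / n := by field_simp
      _ < s / n := by
        gcongr
        have := (lt_div_iff₀ hs).1 (sub_lt_iff_lt_add.2 hlt)
        linarith
      _ ≤ s / (x / s) := by gcongr
      _ = s ^ 2 / x := by field_simp
  refine ⟨n, hn, ?_⟩
  rw [Metric.mem_ball, Real.dist_eq, abs_sub_lt_iff]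
  constructor
  · linarith
  · have : s ^ 2 / x < ε := by rwa [div_lt_comm₀ hx0 hε]
    linarith

theorem complement_bounded (Sstar : Set ℝ) (hsub : Sstar ⊆ Set.Ioi 0)
    (hne : Sstar.Nonempty) (hopen : IsOpen Sstar)
    (hadd : ∀ a ∈ Sstar, ∀ b ∈ Sstar, a + b ∈ Sstar) :
    Bornology.IsBounded (Set.Ici (0 : ℝ) \ Sstar) := by
  obtain ⟨s, hs⟩ := hne
  obtain ⟨ε, hε, hball⟩ := Metric.isOpen_iff.mp hopen s hs
  refine (Metric.isBounded_Icc 0 (s ^ 2 / ε)).subset ?_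
  rintro x ⟨hx0, hxS⟩
  refine ⟨hx0, not_lt.1 fun hx => hxS ?_⟩
  obtain ⟨n, hn, hxn⟩ := exists_div_nat_mem_ball (hsub hs) hx hε
  have hn' : (n : ℝ) ≠ 0 := Nat.cast_ne_zero.2 hn.ne'
  simpa [nsmul_eq_mul, mul_div_cancel₀ x hn'] using nsmul_mem_of_add_mem hadd (hball hxn) hn
end

section
/- Let S* ⊆ (0, ∞) be open and additive with infimum l > 0, and let S = [0, ∞) \ S*. Then S contains no open interval of length greater than l; that is, for any a < b with b - a > l, the interval (a, b) is not contained in S. -/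
/-!
Pick `s ∈ S*` with `s < b - a` (possible since `inf S* < b - a`). Additivity puts every
multiple `(n + 1) • s` in `S*`, and consecutive multiples are closer than `b - a`, so one of
them lands in `(a, b)`; and `a ≥ 0` because `(a, b) ⊆ [0, ∞)`.
-/

theorem succ_nsmul_mem_of_add_mem {M : Type*} [AddMonoid M] {S : Set M}
    (hadd : ∀ x ∈ S, ∀ y ∈ S, x + y ∈ S) {s : M} (hs : s ∈ S) (n : ℕ) : (n + 1) • s ∈ S := by
  induction n with
  | zero => simpa using hs
  | succ n ih => simpa only [succ_nsmul] using hadd _ ih _ hs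

theorem exists_succ_nsmul_mem_Ioo {K : Type*} [Field K] [LinearOrder K] [IsStrictOrderedRing K]
    [FloorSemiring K] {a b s : K} (ha : 0 ≤ a) (hs : 0 < s) (hsb : s < b - a) :
    ∃ n : ℕ, (n + 1) • s ∈ Set.Ioo a b := by
  refine ⟨⌊a / s⌋₊, ?_, ?_⟩ <;> rw [nsmul_eq_mul, Nat.cast_succ]
  · exact (div_lt_iff₀ hs).1 (Nat.lt_floor_add_one _)
  · have hfloor : (⌊a / s⌋₊ : K) * s ≤ a := (le_div_iff₀ hs).1 (Nat.floor_le (by positivity))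
    linarith

theorem le_of_Ioo_subset_Ici {α : Type*} [LinearOrder α] [DenselyOrdered α] {a b c : α}
    (hab : a < b) (h : Set.Ioo a b ⊆ Set.Ici c) : c ≤ a := by
  by_contra! hac
  obtain ⟨x, hax, hxbc⟩ := exists_between (lt_min hab hac)
  exact (h ⟨hax, hxbc.trans_le (min_le_left _ _)⟩).not_gt (hxbc.trans_le (min_le_right _ _))

theorem no_long_interval_general (Sstar : Set ℝ) (hsub : Sstar ⊆ Set.Ioi 0)
    (hadd : ∀ a ∈ Sstar, ∀ b ∈ Sstar, a + b ∈ Sstar)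
    (hl : 0 < sInf Sstar) (a b : ℝ) (hlen : sInf Sstar < b - a) :
    ¬ (Set.Ioo a b ⊆ Set.Ici (0 : ℝ) \ Sstar) := by
  intro hsubset
  have hne : Sstar.Nonempty := Set.nonempty_iff_ne_empty.2 fun h => by simp [h] at hl
  obtain ⟨s, hs, hsb⟩ := exists_lt_of_csInf_lt hne hlen
  have ha : 0 ≤ a :=
    le_of_Ioo_subset_Ici (by linarith) (hsubset.trans Set.sdiff_subset)
  obtain ⟨n, hn⟩ := exists_succ_nsmul_mem_Ioo ha (hsub hs) hsb
  exact (hsubset hn).2 (succ_nsmul_mem_of_add_mem hadd hs n)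

theorem no_long_interval (Sstar : Set ℝ) (hsub : Sstar ⊆ Set.Ioi 0)
    (hopen : IsOpen Sstar) (hadd : ∀ a ∈ Sstar, ∀ b ∈ Sstar, a + b ∈ Sstar)
    (hl : 0 < sInf Sstar) (a b : ℝ) (hab : a < b) (hlen : sInf Sstar < b - a) :
    ¬ (Set.Ioo a b ⊆ Set.Ici (0 : ℝ) \ Sstar) :=
  no_long_interval_general Sstar hsub hadd hl a b hlen
end

section
/- Let S* ⊆ (0, ∞) be open and additive, let S = [0, ∞) \ S*. If s* ∈ S* and s is a boundary point of S (equivalently of S*) with s > 0, then s + s* ∈ S*. -/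
/-! Since `S*` is open, `closure S* + S* = S* + S*`, and additivity gives `S* + S* ⊆ S*`.
A positive boundary point of `[0, ∞) \ S*` lies on the frontier of `S*`, hence in its closure. -/

open scoped Pointwise in
theorem IsOpen.add_mem_of_mem_closure {G : Type*} [TopologicalSpace G] [AddGroup G]
    [IsTopologicalAddGroup G] {U : Set G} (hU : IsOpen U)
    (hadd : ∀ a ∈ U, ∀ b ∈ U, a + b ∈ U) {s t : G} (hs : s ∈ closure U) (ht : t ∈ U) :
    s + t ∈ U := by
  have hst : s + t ∈ closure U + U := Set.add_mem_add hs ht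
  rw [hU.closure_add] at hst
  exact Set.add_subset_iff.mpr hadd hst

theorem mem_frontier_of_mem_frontier_Ici_diff {α : Type*} [TopologicalSpace α] [LinearOrder α]
    [OrderTopology α] [DenselyOrdered α] [NoMinOrder α] {a s : α} {U : Set α} (hs : s ≠ a)
    (hfr : s ∈ frontier (Set.Ici a \ U)) : s ∈ frontier U := by
  rw [Set.sdiff_eq] at hfr
  rcases frontier_inter_subset _ _ hfr with ⟨hIci, -⟩ | ⟨-, hU⟩
  · rw [frontier_Ici] at hIci
    exact absurd hIci hs
  · rwa [frontier_compl] at hU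

theorem boundary_add_mem_general (Sstar : Set ℝ)
    (hopen : IsOpen Sstar) (hadd : ∀ a ∈ Sstar, ∀ b ∈ Sstar, a + b ∈ Sstar)
    (sstar : ℝ) (hsstar : sstar ∈ Sstar) (s : ℝ) (hs : s > 0)
    (hbd : s ∈ frontier (Set.Ici (0 : ℝ) \ Sstar)) :
    s + sstar ∈ Sstar :=
  hopen.add_mem_of_mem_closure hadd
    (frontier_subset_closure (mem_frontier_of_mem_frontier_Ici_diff hs.ne' hbd)) hsstar

theorem boundary_add_mem (Sstar : Set ℝ) (hsub : Sstar ⊆ Set.Ioi 0)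
    (hopen : IsOpen Sstar) (hadd : ∀ a ∈ Sstar, ∀ b ∈ Sstar, a + b ∈ Sstar)
    (sstar : ℝ) (hsstar : sstar ∈ Sstar) (s : ℝ) (hs : s > 0)
    (hbd : s ∈ frontier (Set.Ici (0 : ℝ) \ Sstar)) :
    s + sstar ∈ Sstar :=
  boundary_add_mem_general Sstar hopen hadd sstar hsstar s hs hbd
end

section
/- Let S* ⊆ (0, ∞) be open and additive, S = [0, ∞) \ S* nonempty and bounded with L = sup S. For x ∈ [0, L] define a(x) = sup{ y ∈ ∂S : y ≤ x } and b(x) = inf{ y ∈ ∂S : y ≥ x }, and α(x) = x − a(x), β(x) = b(x) − x. Then for all s ∈ S ∩ [0, L], α(s) ∈ S and β(s) ∈ S. -/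
/-!
An interval `[u, u + m]` with `u ≥ 0` contains a positive multiple of `m`, so if such an interval
lies in `S` then `m` is not in the additive set `S*`. Since `S` is closed and `a(s)`, `b(s)` are the
boundary points of `S` nearest to `s`, the intervals `[a(s), s]` and `[s, b(s)]` lie in `S`, and
their lengths are `α(s)` and `β(s)`.
-/

open Set

theorem IsPreconnected.inter_frontier_nonempty {X : Type*} [TopologicalSpace X] {s t : Set X}
    (ht : IsPreconnected t) (hts : (t ∩ s).Nonempty) (hts' : (t \ s).Nonempty) :
    (t ∩ frontier s).Nonempty := by
  by_contra! h
  have hcover : t ⊆ interior s ∪ interior sᶜ := by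
    intro x hx
    have hxfr : x ∉ frontier s := fun hfr => h.subset ⟨hx, hfr⟩
    rw [frontier, mem_sdiff, not_and_not_right] at hxfr
    rw [interior_compl]
    by_cases hcl : x ∈ closure s
    exacts [Or.inl (hxfr hcl), Or.inr hcl]
  have hdisj : Disjoint (interior s) (interior sᶜ) :=
    disjoint_compl_right.mono interior_subset interior_subset
  rcases ht.subset_or_subset isOpen_interior isOpen_interior hdisj hcover with hs | hs
  · obtain ⟨x, hxt, hxs⟩ := hts'
    exact hxs (interior_subset (hs hxt))
  · obtain ⟨x, hxt, hxs⟩ := hts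
    exact interior_subset (hs hxt) hxs

section LinearOrder

variable {α : Type*} [TopologicalSpace α] [LinearOrder α] [OrderTopology α] [DenselyOrdered α]
  {s : Set α} {a : α}

theorem IsLeast.mem_frontier [NoMinOrder α] (h : IsLeast s a) : a ∈ frontier s :=
  ⟨subset_closure h.1, fun ha => lt_irrefl a (interior_Ici.subset (interior_mono h.2 ha))⟩

theorem IsGreatest.mem_frontier [NoMaxOrder α] (h : IsGreatest s a) : a ∈ frontier s :=
  IsLeast.mem_frontier (α := αᵒᵈ) h

end LinearOrder

section ConditionallyComplete

variable {α : Type*} [ConditionallyCompleteLinearOrder α] [TopologicalSpace α] [OrderTopology α]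
  [DenselyOrdered α] {s : Set α} {x : α}

theorem IsClosed.Icc_sSup_frontier_subset (hs : IsClosed s) (hx : x ∈ s) :
    Icc (sSup {y | y ∈ frontier s ∧ y ≤ x}) x ⊆ s := by
  intro z hz
  by_contra hzs
  obtain ⟨y, hy, hyfr⟩ := isPreconnected_Icc.inter_frontier_nonempty
    ⟨x, ⟨hz.2, le_rfl⟩, hx⟩ ⟨z, ⟨le_rfl, hz.2⟩, hzs⟩
  have hy_le : y ≤ sSup {y | y ∈ frontier s ∧ y ≤ x} := le_csSup ⟨x, fun _ h => h.2⟩ ⟨hyfr, hy.2⟩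
  have hzy : z = y := le_antisymm hy.1 (hy_le.trans hz.1)
  exact hzs (hzy ▸ hs.frontier_subset hyfr)

theorem IsClosed.Icc_sInf_frontier_subset (hs : IsClosed s) (hx : x ∈ s) :
    Icc x (sInf {y | y ∈ frontier s ∧ x ≤ y}) ⊆ s :=
  fun _ hz => IsClosed.Icc_sSup_frontier_subset (α := αᵒᵈ) hs hx ⟨hz.2, hz.1⟩

end ConditionallyComplete

theorem exists_add_one_nsmul_mem_Icc {m : ℝ} (hm : 0 < m) {u : ℝ} (hu : 0 ≤ u) :
    ∃ n : ℕ, (n + 1) • m ∈ Icc u (u + m) := by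
  refine ⟨⌊u / m⌋₊, ?_⟩
  have h_lt : u < (⌊u / m⌋₊ + 1) * m := (div_lt_iff₀ hm).1 (Nat.lt_floor_add_one _)
  have h_le : ⌊u / m⌋₊ * m ≤ u := (le_div_iff₀ hm).1 (Nat.floor_le (div_nonneg hu hm.le))
  rw [nsmul_eq_mul, Nat.cast_add_one]
  constructor <;> linarith

theorem add_one_nsmul_mem_of_add_mem {M : Type*} [AddMonoid M] {P : Set M}
    (hadd : ∀ p ∈ P, ∀ q ∈ P, p + q ∈ P) {m : M} (hm : m ∈ P) (n : ℕ) : (n + 1) • m ∈ P := by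
  induction n with
  | zero => simpa using hm
  | succ n ih => simpa [succ_nsmul _ (n + 1)] using hadd _ ih m hm

theorem sub_notMem_of_disjoint_Icc {P : Set ℝ} (hpos : P ⊆ Ioi 0)
    (hadd : ∀ p ∈ P, ∀ q ∈ P, p + q ∈ P) {u v : ℝ} (hu : 0 ≤ u) (h : Disjoint (Icc u v) P) :
    v - u ∉ P := by
  intro hm
  obtain ⟨n, hn⟩ := exists_add_one_nsmul_mem_Icc (hpos hm) hu
  rw [add_sub_cancel] at hn
  exact h.notMem_of_mem_left hn (add_one_nsmul_mem_of_add_mem hadd hm n)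

theorem alpha_beta_in_S_general (Sstar : Set ℝ) (hsub : Sstar ⊆ Set.Ioi 0)
    (hopen : IsOpen Sstar) (hadd : ∀ p ∈ Sstar, ∀ q ∈ Sstar, p + q ∈ Sstar)
    (S : Set ℝ) (hS : S = Set.Ici (0 : ℝ) \ Sstar)
    (hbdd : BddAbove S) (L : ℝ) (hL : L = sSup S)
    (a b : ℝ → ℝ)
    (ha : ∀ x, a x = sSup {y | y ∈ frontier S ∧ y ≤ x})
    (hb : ∀ x, b x = sInf {y | y ∈ frontier S ∧ x ≤ y}) :
    ∀ s ∈ S ∩ Set.Icc 0 L, (s - a s) ∈ S ∧ (b s - s) ∈ S := by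
  have hS_closed : IsClosed S := hS ▸ isClosed_Ici.sdiff hopen
  have length_mem : ∀ {u v}, 0 ≤ u → u ≤ v → Icc u v ⊆ S → v - u ∈ S := fun hu huv h => by
    rw [hS, subset_sdiff] at h
    exact hS ▸ ⟨sub_nonneg.2 huv, sub_notMem_of_disjoint_Icc hsub hadd hu h.2⟩
  have h0 : (0 : ℝ) ∈ frontier S := by
    rw [hS]
    exact IsLeast.mem_frontier ⟨⟨self_mem_Ici, fun h => lt_irrefl (0 : ℝ) (hsub h)⟩, sdiff_subset⟩
  rintro s ⟨hs, hs0, hsL⟩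
  have hL_fr : L ∈ frontier S := (hL ▸ hS_closed.isGreatest_csSup ⟨s, hs⟩ hbdd).mem_frontier
  have ha0 : 0 ≤ a s := ha s ▸ le_csSup ⟨s, fun _ h => h.2⟩ ⟨h0, hs0⟩
  have has : a s ≤ s := ha s ▸ csSup_le ⟨0, h0, hs0⟩ fun _ h => h.2
  have hsb : s ≤ b s := hb s ▸ le_csInf ⟨L, hL_fr, hsL⟩ fun _ h => h.2
  exact ⟨length_mem ha0 has (ha s ▸ hS_closed.Icc_sSup_frontier_subset hs),
    length_mem hs0 hsb (hb s ▸ hS_closed.Icc_sInf_frontier_subset hs)⟩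

theorem alpha_beta_in_S (Sstar : Set ℝ) (hsub : Sstar ⊆ Set.Ioi 0)
    (hopen : IsOpen Sstar) (hadd : ∀ p ∈ Sstar, ∀ q ∈ Sstar, p + q ∈ Sstar)
    (S : Set ℝ) (hS : S = Set.Ici (0 : ℝ) \ Sstar)
    (hne : S.Nonempty) (hbdd : BddAbove S) (L : ℝ) (hL : L = sSup S)
    (a b : ℝ → ℝ)
    (ha : ∀ x, a x = sSup {y | y ∈ frontier S ∧ y ≤ x})
    (hb : ∀ x, b x = sInf {y | y ∈ frontier S ∧ x ≤ y}) :
    ∀ s ∈ S ∩ Set.Icc 0 L, (s - a s) ∈ S ∧ (b s - s) ∈ S :=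
  alpha_beta_in_S_general Sstar hsub hopen hadd S hS hbdd L hL a b ha hb
end

section
/- Let S ⊆ [0, ∞) be closed with complement S* = [0, ∞) \ S open and additive, S bounded with L = sup S, and define h_S : [0, L] → ℝ by h_S(x) = 0 if x ∈ ∂S, h_S(x) = dist(x, ∂S) if x is in the interior of S, and h_S(x) = −dist(x, ∂S) if x ∈ S*. Then h_S is continuous, h_S(0) = h_S(L) = 0, and for every s ∈ S with s ≤ L there exists x ∈ [0, L − s] with h_S(x + s) = h_S(x). -/
/-!
On the interior of `S` and on `S*` the function `h_S` is `± dist(·, ∂S)`, hence continuous there,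
and at a boundary point it is squeezed to `0` by `|h_S y| ≤ dist(y, ∂S)`.

For `s ∈ S`, let `b` be the first boundary point `≥ s`, so that `[s, b] ⊆ S`. The gap `b - s` lies
in `S`: otherwise all its positive multiples lie in the additive set `S*`, yet one of them falls
into `(s, b]`. Since `h_S ≥ 0` on `S` and `h_S` vanishes at `0` and `b`, the function
`x ↦ h_S (x + s) - h_S x` is `≥ 0` at `0` and `≤ 0` at `b - s`, and the intermediate value theorem
gives the chord.
-/

open Set Filter Topology Metric

theorem IsPreconnected.inter_frontier_nonempty_s15 {X : Type*} [TopologicalSpace X] {C S : Set X}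
    (hC : IsPreconnected C) (hCS : (C ∩ S).Nonempty) (hCS' : (C \ S).Nonempty) :
    (C ∩ frontier S).Nonempty := by
  obtain ⟨a, haC, haS⟩ := hCS
  by_cases haF : a ∈ frontier S
  · exact ⟨a, haC, haF⟩
  by_contra hCF
  have hcover : C ⊆ interior S ∪ (closure S)ᶜ := fun x hxC => by
    have hxF : x ∉ frontier S := fun hxF => hCF ⟨x, hxC, hxF⟩
    rw [frontier, Set.mem_sdiff] at hxF
    tauto
  have haI : a ∈ interior S := by rw [← self_sdiff_frontier]; exact ⟨haS, haF⟩
  have hCI : C ⊆ interior S := hC.subset_left_of_subset_union isOpen_interior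
    isClosed_closure.isOpen_compl (disjoint_compl_right.mono_left interior_subset_closure)
    hcover ⟨a, haC, haI⟩
  obtain ⟨y, hyC, hyS⟩ := hCS'
  exact hyS (interior_subset (hCI hyC))

section Order

variable {α : Type*} [LinearOrder α] [TopologicalSpace α] [OrderTopology α] [DenselyOrdered α]

theorem IsLUB.mem_frontier [NoMaxOrder α] {S : Set α} {a : α} (ha : IsLUB S a)
    (hS : S.Nonempty) : a ∈ frontier S := by
  refine ⟨ha.mem_closure hS, fun haI => ?_⟩
  obtain ⟨b, hab, hbS⟩ := Filter.Eventually.exists_gt (mem_interior_iff_mem_nhds.1 haI)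
  exact (ha.1 hbS).not_gt hab

theorem IsGLB.mem_frontier [NoMinOrder α] {S : Set α} {a : α} (ha : IsGLB S a)
    (hS : S.Nonempty) : a ∈ frontier S := by
  refine ⟨ha.mem_closure hS, fun haI => ?_⟩
  obtain ⟨b, hba, hbS⟩ := Filter.Eventually.exists_lt (mem_interior_iff_mem_nhds.1 haI)
  exact (ha.1 hbS).not_gt hba

theorem mem_of_isOpen_Ici_sdiff [NoMinOrder α] {S : Set α} {a : α} (h : IsOpen (Ici a \ S)) :
    a ∈ S := by
  by_contra haS
  obtain ⟨b, hba, hb⟩ := Filter.Eventually.exists_lt (h.mem_nhds ⟨le_refl a, haS⟩)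
  exact hba.not_ge hb.1

end Order

theorem exists_mem_frontier_Icc_subset {α : Type*} [ConditionallyCompleteLinearOrder α]
    [TopologicalSpace α] [OrderTopology α] [DenselyOrdered α] {S : Set α} (hS : IsClosed S)
    {s : α} (hs : s ∈ S) (hT : (frontier S ∩ Ici s).Nonempty) :
    ∃ b ∈ frontier S, s ≤ b ∧ Icc s b ⊆ S := by
  have hTb : BddBelow (frontier S ∩ Ici s) := ⟨s, fun _ h => h.2⟩
  obtain ⟨hbF, hsb⟩ := (isClosed_frontier.inter isClosed_Ici).csInf_mem hT hTb
  refine ⟨_, hbF, hsb, fun y hy => by_contra fun hyS => ?_⟩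
  obtain ⟨f, ⟨hsf, hfy⟩, hfF⟩ := isPreconnected_Icc.inter_frontier_nonempty_s15
    ⟨s, ⟨le_rfl, hy.1⟩, hs⟩ ⟨y, ⟨hy.1, le_rfl⟩, hyS⟩
  have hbf : sInf (frontier S ∩ Ici s) ≤ f := csInf_le hTb ⟨hfF, hsf⟩
  have hyf : y = f := le_antisymm (hy.2.trans hbf) hfy
  exact hyS (hyf ▸ hS.frontier_subset hfF)

theorem nsmul_mem_of_add_mem_s15 {M : Type*} [AddMonoid M] {T : Set M}
    (hT : ∀ p ∈ T, ∀ q ∈ T, p + q ∈ T) {x : M} (hx : x ∈ T) {n : ℕ} (hn : n ≠ 0) :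
    n • x ∈ T := by
  induction n with
  | zero => exact absurd rfl hn
  | succ n ih =>
    rcases eq_or_ne n 0 with rfl | hn'
    · simpa using hx
    · rw [succ_nsmul]; exact hT _ (ih hn') _ hx

theorem exists_nsmul_mem_Ioc {K : Type*} [Field K] [LinearOrder K] [IsStrictOrderedRing K]
    [FloorSemiring K] {s β : K} (hs : 0 ≤ s) (hβ : 0 < β) :
    ∃ n : ℕ, n • β ∈ Ioc s (s + β) := by
  have hlt : s < (⌊s / β⌋₊ + 1) * β := (div_lt_iff₀ hβ).1 (Nat.lt_floor_add_one _)
  have hle : ⌊s / β⌋₊ * β ≤ s := (le_div_iff₀ hβ).1 (Nat.floor_le (div_nonneg hs hβ.le))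
  refine ⟨⌊s / β⌋₊ + 1, ?_, ?_⟩ <;> push_cast [nsmul_eq_mul] <;> linarith

theorem sub_mem_of_Icc_subset {K : Type*} [Field K] [LinearOrder K] [IsStrictOrderedRing K]
    [FloorSemiring K] {S : Set K}
    (hadd : ∀ p ∈ Ici 0 \ S, ∀ q ∈ Ici 0 \ S, p + q ∈ Ici 0 \ S) (h0 : (0 : K) ∈ S) {s b : K}
    (hs : 0 ≤ s) (hsb : s ≤ b) (hsub : Icc s b ⊆ S) : b - s ∈ S := by
  by_contra hbs
  have hpos : 0 < b - s := (sub_nonneg.2 hsb).lt_of_ne fun h => hbs (h ▸ h0)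
  obtain ⟨n, hsn, hnb⟩ := exists_nsmul_mem_Ioc hs hpos
  have hn : n ≠ 0 := by rintro rfl; rw [zero_smul] at hsn; linarith
  exact (nsmul_mem_of_add_mem_s15 hadd ⟨sub_nonneg.2 hsb, hbs⟩ hn).2
    (hsub ⟨hsn.le, by linarith⟩)

theorem exists_horizontal_chord {f : ℝ → ℝ} {s b : ℝ} (hs : 0 ≤ s) (hsb : s ≤ b)
    (hf : ContinuousOn f (Icc 0 b)) (h0 : f 0 ≤ f s) (hb : f b ≤ f (b - s)) :
    ∃ x ∈ Icc 0 (b - s), f (x + s) = f x := by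
  have hg : ContinuousOn (fun x => f (x + s) - f x) (Icc 0 (b - s)) :=
    (hf.comp (continuous_add_const s).continuousOn fun x hx =>
      show x + s ∈ Icc 0 b from ⟨by linarith [hx.1], by linarith [hx.2]⟩).sub
      (hf.mono (Icc_subset_Icc_right (by linarith)))
  obtain ⟨x, hx, hx0⟩ := intermediate_value_Icc' (sub_nonneg.2 hsb) hg
    (show (0 : ℝ) ∈ Icc (f (b - s + s) - f (b - s)) (f (0 + s) - f 0) by
      rw [sub_add_cancel, zero_add]; constructor <;> linarith)
  exact ⟨x, hx, sub_eq_zero.1 hx0⟩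

theorem continuousWithinAt_of_abs_le_dist {X : Type*} [PseudoMetricSpace X] {f : X → ℝ}
    {s : Set X} {x : X} (hx : f x = 0) (hf : ∀ y ∈ s, |f y| ≤ dist y x) :
    ContinuousWithinAt f s x := by
  rw [ContinuousWithinAt, hx]
  refine squeeze_zero_norm' (eventually_nhdsWithin_of_forall hf) ?_
  simpa using (tendsto_id.dist (tendsto_const_nhds (x := x))).mono_left
    (nhdsWithin_le_nhds (s := s) (a := x))

namespace SignedDistFrontier

variable {S : Set ℝ} {h : ℝ → ℝ}

theorem nonneg_of_mem (hbd : ∀ x ∈ frontier S, h x = 0)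
    (hint : ∀ x ∈ interior S, h x = infDist x (frontier S)) {y : ℝ} (hy : y ∈ S) : 0 ≤ h y := by
  by_cases hyF : y ∈ frontier S
  · exact (hbd y hyF).ge
  · rw [hint y (by rw [← self_sdiff_frontier]; exact ⟨hy, hyF⟩)]
    exact infDist_nonneg

theorem abs_le_infDist_frontier (hbd : ∀ x ∈ frontier S, h x = 0)
    (hint : ∀ x ∈ interior S, h x = infDist x (frontier S))
    (hstar : ∀ x ∈ Ici 0 \ S, h x = -infDist x (frontier S)) {y : ℝ} (hy : 0 ≤ y) :
    |h y| ≤ infDist y (frontier S) := by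
  by_cases hyF : y ∈ frontier S
  · rw [hbd y hyF, abs_zero]; exact infDist_nonneg
  by_cases hyS : y ∈ S
  · rw [hint y (by rw [← self_sdiff_frontier]; exact ⟨hyS, hyF⟩), abs_of_nonneg infDist_nonneg]
  · rw [hstar y ⟨hy, hyS⟩, abs_neg, abs_of_nonneg infDist_nonneg]

theorem continuousOn_Ici (hopen : IsOpen (Ici 0 \ S)) (hbd : ∀ x ∈ frontier S, h x = 0)
    (hint : ∀ x ∈ interior S, h x = infDist x (frontier S))
    (hstar : ∀ x ∈ Ici 0 \ S, h x = -infDist x (frontier S)) : ContinuousOn h (Ici 0) := by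
  intro x hx
  by_cases hxF : x ∈ frontier S
  · exact continuousWithinAt_of_abs_le_dist (hbd x hxF) fun y hy =>
      (abs_le_infDist_frontier hbd hint hstar hy).trans (infDist_le_dist_of_mem hxF)
  by_cases hxS : x ∈ S
  · have hxI : x ∈ interior S := by rw [← self_sdiff_frontier]; exact ⟨hxS, hxF⟩
    exact ((continuous_infDist_pt _).continuousAt.congr (eventuallyEq_of_mem
      (isOpen_interior.mem_nhds hxI) fun y hy => (hint y hy).symm)).continuousWithinAt
  · exact ((continuous_infDist_pt _).neg.continuousAt.congr (eventuallyEq_of_mem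
      (hopen.mem_nhds ⟨hx, hxS⟩) fun y hy => (hstar y hy).symm)).continuousWithinAt

end SignedDistFrontier

theorem hopf_theorem_II_existence (S Sstar : Set ℝ) (hSclosed : IsClosed S)
    (hSsub : S ⊆ Set.Ici 0) (hSstar : Sstar = Set.Ici (0 : ℝ) \ S)
    (hopen : IsOpen Sstar) (hadd : ∀ p ∈ Sstar, ∀ q ∈ Sstar, p + q ∈ Sstar)
    (hne : S.Nonempty) (hbdd : BddAbove S) (L : ℝ) (hL : L = sSup S)
    (hS : ℝ → ℝ)
    (hdef_bd : ∀ x ∈ frontier S, hS x = 0)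
    (hdef_int : ∀ x ∈ interior S, hS x = Metric.infDist x (frontier S))
    (hdef_star : ∀ x ∈ Sstar, hS x = -Metric.infDist x (frontier S)) :
    ContinuousOn hS (Set.Icc 0 L) ∧ hS 0 = 0 ∧ hS L = 0 ∧
      ∀ s ∈ S, s ≤ L → ∃ x ∈ Set.Icc 0 (L - s), hS (x + s) = hS x := by
  subst hSstar
  have h0 : (0 : ℝ) ∈ S := mem_of_isOpen_Ici_sdiff hopen
  have h0F : (0 : ℝ) ∈ frontier S := (IsLeast.isGLB ⟨h0, hSsub⟩).mem_frontier ⟨0, h0⟩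
  have hLF : L ∈ frontier S := hL ▸ (isLUB_csSup hne hbdd).mem_frontier hne
  have hcont : ContinuousOn hS (Icc 0 L) :=
    (SignedDistFrontier.continuousOn_Ici hopen hdef_bd hdef_int hdef_star).mono
      Icc_subset_Ici_self
  refine ⟨hcont, hdef_bd 0 h0F, hdef_bd L hLF, fun s hs hsL => ?_⟩
  obtain ⟨b, hbF, hsb, hsbS⟩ := exists_mem_frontier_Icc_subset hSclosed hs ⟨L, hLF, hsL⟩
  have hbL : b ≤ L := hL ▸ le_csSup hbdd (hSclosed.frontier_subset hbF)
  have hgap : b - s ∈ S := sub_mem_of_Icc_subset hadd h0 (hSsub hs) hsb hsbS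
  obtain ⟨x, hx, hxs⟩ := exists_horizontal_chord (hSsub hs) hsb
    (hcont.mono (Icc_subset_Icc_right hbL))
    (by rw [hdef_bd 0 h0F]; exact SignedDistFrontier.nonneg_of_mem hdef_bd hdef_int hs)
    (by rw [hdef_bd b hbF]; exact SignedDistFrontier.nonneg_of_mem hdef_bd hdef_int hgap)
  exact ⟨x, ⟨hx.1, hx.2.trans (by linarith)⟩, hxs⟩
end

section
/- For every real L > 1 with L not an integer, there exists a continuous function g : [0, T] → ℝ (for any T > 0) with g(0) = 0, g(T) = L, g nondecreasing, such that for all t ∈ [0, T − T/L], g(t + T/L) − g(t) ≠ 1. -/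
/-!
Rescale time so that the average pace is one mile per unit of time. The position is then
`G x = (1 + δ) x + (cos (2πx) - 1) / 8` with `δ = (1 - cos (2πL)) / (8L)`, chosen so that
`G 0 = 0` and `G L = L`. The oscillating term is `1`-periodic, so every unit of time covers
exactly `1 + δ` miles, and `δ > 0` precisely because `L` is not an integer. The oscillation has
slope at most `π / 4 < 1`, so `G` is nondecreasing.
-/

open Real

theorem monotone_mul_add_of_abs_sub_le {h : ℝ → ℝ} {K a : ℝ}
    (hh : ∀ x y, |h x - h y| ≤ K * |x - y|) (hK : K ≤ a) :
    Monotone fun x => a * x + h x := by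
  intro x y hxy
  have hxy' : 0 ≤ y - x := sub_nonneg.mpr hxy
  have hbound : h x - h y ≤ K * (y - x) := by
    calc h x - h y ≤ |h x - h y| := le_abs_self _
      _ ≤ K * |x - y| := hh x y
      _ = K * (y - x) := by rw [abs_sub_comm, abs_of_nonneg hxy']
  have hKa : K * (y - x) ≤ a * (y - x) := mul_le_mul_of_nonneg_right hK hxy'
  simp only
  linarith

namespace RacePace

noncomputable def surplus (L : ℝ) : ℝ := (1 - cos (2 * π * L)) / (8 * L)

noncomputable def position (L x : ℝ) : ℝ := (1 + surplus L) * x + (cos (2 * π * x) - 1) / 8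

theorem surplus_pos {L : ℝ} (hL : 0 < L) (hnotint : ∀ n : ℤ, L ≠ n) : 0 < surplus L := by
  have hcos : cos (2 * π * L) ≠ 1 := by
    rw [Ne, cos_eq_one_iff]
    rintro ⟨n, hn⟩
    exact hnotint n (by nlinarith [pi_pos])
  have hlt : cos (2 * π * L) < 1 := lt_of_le_of_ne (cos_le_one _) hcos
  unfold surplus
  apply div_pos <;> linarith

theorem continuous_position (L : ℝ) : Continuous (position L) := by
  unfold position
  fun_prop

theorem position_zero (L : ℝ) : position L 0 = 0 := by
  simp [position]

theorem position_self {L : ℝ} (hL : L ≠ 0) : position L L = L := by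
  unfold position surplus
  field_simp
  ring

theorem position_add_one_sub (L x : ℝ) :
    position L (x + 1) - position L x = 1 + surplus L := by
  have hperiod : cos (2 * π * (x + 1)) = cos (2 * π * x) := by
    rw [mul_add, mul_one, cos_add_two_pi]
  simp only [position, hperiod]
  ring

theorem abs_oscillation_sub_le (x y : ℝ) :
    |(cos (2 * π * x) - 1) / 8 - (cos (2 * π * y) - 1) / 8| ≤ π / 4 * |x - y| := by
  have h := abs_cos_sub_cos_le (2 * π * x) (2 * π * y)
  rw [← mul_sub, abs_mul, abs_of_pos (by positivity : (0 : ℝ) < 2 * π)] at h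
  rw [show (cos (2 * π * x) - 1) / 8 - (cos (2 * π * y) - 1) / 8
      = (cos (2 * π * x) - cos (2 * π * y)) / 8 by ring, abs_div, abs_of_pos (by norm_num : (0 : ℝ) < 8)]
  linarith

theorem monotone_position {L : ℝ} (hL : 0 < L) (hnotint : ∀ n : ℤ, L ≠ n) :
    Monotone (position L) :=
  monotone_mul_add_of_abs_sub_le abs_oscillation_sub_le
    (by linarith [pi_le_four, surplus_pos hL hnotint])

end RacePace

open RacePace in
theorem race_no_average_mile (L : ℝ) (hL : 1 < L) (hnotint : ∀ n : ℤ, L ≠ n)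
    (T : ℝ) (hT : 0 < T) :
    ∃ g : ℝ → ℝ, ContinuousOn g (Set.Icc 0 T) ∧ g 0 = 0 ∧ g T = L ∧
      MonotoneOn g (Set.Icc 0 T) ∧
      ∀ t ∈ Set.Icc (0 : ℝ) (T - T / L), g (t + T / L) - g t ≠ 1 := by
  have hL0 : 0 < L := by linarith
  have hrate : 0 < L / T := div_pos hL0 hT
  refine ⟨fun t => position L (L / T * t), ?_, ?_, ?_, ?_, ?_⟩
  · exact ((continuous_position L).comp (continuous_const.mul continuous_id)).continuousOn
  · simp only [mul_zero, position_zero]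
  · simp only [div_mul_cancel₀ L hT.ne', position_self hL0.ne']
  · exact ((monotone_position hL0 hnotint).comp fun _ _ h =>
      mul_le_mul_of_nonneg_left h hrate.le).monotoneOn _
  · intro t _
    have hstep : L / T * (t + T / L) = L / T * t + 1 := by
      field_simp
    simp only [hstep, position_add_one_sub]
    linarith [surplus_pos hL0 hnotint]
end

section
/- Let f : [0, L] → ℝ be continuous with f(0) = f(L) = 0, and suppose f changes sign exactly once in (0, L) (i.e., there is c ∈ (0, L) with f > 0 on one of (0,c), (c,L) and f < 0 on the other, f(c) = 0). Then for every h ∈ (0, L/2] there exists x ∈ [0, L − h] with f(x + h) = f(x). -/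
/-!
Compare `f` with its translate `x ↦ f (x + h)` on `[0, L - h]`. If `f ≥ 0` on `[0, c]` and `f ≤ 0`
on `[c, L]`, the chord difference `f (x + h) - f x` has opposite signs at `0` and at one of the
points `c`, `L - h`, chosen according to whether `h ≤ c` and `c ≤ L - h`; the intermediate value
theorem then yields a chord of length `h`.
-/

open Set

section HorizontalChord

variable {f : ℝ → ℝ} {L h : ℝ}

lemma continuousOn_comp_add_right_Icc (hf : ContinuousOn f (Icc 0 L)) (hh : 0 ≤ h) :
    ContinuousOn (fun x ↦ f (x + h)) (Icc 0 (L - h)) :=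
  hf.comp (continuousOn_id.add continuousOn_const) fun x hx ↦
    ⟨by linarith [hx.1], by linarith [hx.2]⟩

lemma exists_map_add_eq_of_le_of_le (hf : ContinuousOn f (Icc 0 L)) (hh : 0 ≤ h) {a b : ℝ}
    (ha : a ∈ Icc 0 (L - h)) (hb : b ∈ Icc 0 (L - h))
    (hfa : f (a + h) ≤ f a) (hfb : f b ≤ f (b + h)) :
    ∃ x ∈ Icc 0 (L - h), f (x + h) = f x :=
  isPreconnected_Icc.intermediate_value₂ ha hb (continuousOn_comp_add_right_Icc hf hh)
    (hf.mono (Icc_subset_Icc le_rfl (by linarith))) hfa hfb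

lemma exists_map_add_eq_of_nonneg_of_nonpos (hf : ContinuousOn f (Icc 0 L))
    (h0 : f 0 = 0) (hL : f L = 0) {c : ℝ}
    (hpos : ∀ x ∈ Icc 0 c, 0 ≤ f x) (hneg : ∀ x ∈ Icc c L, f x ≤ 0)
    (hh : 0 ≤ h) (hhL : 2 * h ≤ L) :
    ∃ x ∈ Icc 0 (L - h), f (x + h) = f x := by
  have h0mem : (0 : ℝ) ∈ Icc 0 (L - h) := ⟨le_rfl, by linarith⟩
  have hLmem : L - h ∈ Icc 0 (L - h) := ⟨by linarith, le_rfl⟩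
  rcases le_total c h with hch | hhc
  · refine exists_map_add_eq_of_le_of_le hf hh h0mem hLmem ?_ ?_
    · simpa [h0] using hneg h ⟨hch, by linarith⟩
    · simpa [hL] using hneg (L - h) ⟨by linarith, by linarith⟩
  have hf0 : f 0 ≤ f (0 + h) := by simpa [h0] using hpos h ⟨hh, hhc⟩
  rcases le_total c (L - h) with hcL | hLc
  · exact exists_map_add_eq_of_le_of_le hf hh ⟨by linarith, hcL⟩ h0mem
      ((hneg (c + h) ⟨by linarith, by linarith⟩).trans (hpos c ⟨by linarith, le_rfl⟩)) hf0
  · refine exists_map_add_eq_of_le_of_le hf hh hLmem h0mem ?_ hf0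
    simpa [hL] using hpos (L - h) ⟨by linarith, hLc⟩

end HorizontalChord

lemma nonneg_on_Icc_of_pos_on_Ioo {f : ℝ → ℝ} {a b : ℝ} (ha : f a = 0) (hb : f b = 0)
    (hpos : ∀ x ∈ Ioo a b, 0 < f x) : ∀ x ∈ Icc a b, 0 ≤ f x := by
  rintro x ⟨hax, hxb⟩
  rcases hax.eq_or_lt with rfl | hax
  · exact ha.ge
  rcases hxb.eq_or_lt with rfl | hxb
  · exact hb.ge
  exact (hpos x ⟨hax, hxb⟩).le

lemma nonpos_on_Icc_of_neg_on_Ioo {f : ℝ → ℝ} {a b : ℝ} (ha : f a = 0) (hb : f b = 0)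
    (hneg : ∀ x ∈ Ioo a b, f x < 0) : ∀ x ∈ Icc a b, f x ≤ 0 := by
  simpa using nonneg_on_Icc_of_pos_on_Ioo (f := -f) (by simp [ha]) (by simp [hb])
    fun x hx ↦ by simpa using hneg x hx

lemma exists_map_add_eq_of_pos_of_neg {f : ℝ → ℝ} {L c h : ℝ} (hf : ContinuousOn f (Icc 0 L))
    (h0 : f 0 = 0) (hL : f L = 0) (hc : f c = 0)
    (hpos : ∀ x ∈ Ioo 0 c, 0 < f x) (hneg : ∀ x ∈ Ioo c L, f x < 0)
    (hh : 0 ≤ h) (hhL : 2 * h ≤ L) :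
    ∃ x ∈ Icc 0 (L - h), f (x + h) = f x :=
  exists_map_add_eq_of_nonneg_of_nonpos hf h0 hL (nonneg_on_Icc_of_pos_on_Ioo h0 hc hpos)
    (nonpos_on_Icc_of_neg_on_Ioo hc hL hneg) hh hhL

theorem levit_one_sign_change_general (L : ℝ) (f : ℝ → ℝ)
    (hf : ContinuousOn f (Set.Icc 0 L)) (h0 : f 0 = 0) (hLv : f L = 0)
    (c : ℝ) (hfc : f c = 0)
    (hsign : ((∀ x ∈ Set.Ioo 0 c, 0 < f x) ∧ (∀ x ∈ Set.Ioo c L, f x < 0)) ∨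
             ((∀ x ∈ Set.Ioo 0 c, f x < 0) ∧ (∀ x ∈ Set.Ioo c L, 0 < f x))) :
    ∀ h ∈ Set.Ioc 0 (L / 2), ∃ x ∈ Set.Icc 0 (L - h), f (x + h) = f x := by
  rintro h ⟨hh, hhL⟩
  rcases hsign with ⟨hpos, hneg⟩ | ⟨hneg, hpos⟩
  · exact exists_map_add_eq_of_pos_of_neg hf h0 hLv hfc hpos hneg hh.le (by linarith)
  · simpa using exists_map_add_eq_of_pos_of_neg (f := -f) (c := c) hf.neg (by simp [h0]) (by simp [hLv])
      (by simp [hfc]) (fun x hx ↦ by simpa using hneg x hx) (fun x hx ↦ by simpa using hpos x hx)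
      hh.le (by linarith)

theorem levit_one_sign_change (L : ℝ) (hL : 0 < L) (f : ℝ → ℝ)
    (hf : ContinuousOn f (Set.Icc 0 L)) (h0 : f 0 = 0) (hLv : f L = 0)
    (c : ℝ) (hc : c ∈ Set.Ioo 0 L) (hfc : f c = 0)
    (hsign : ((∀ x ∈ Set.Ioo 0 c, 0 < f x) ∧ (∀ x ∈ Set.Ioo c L, f x < 0)) ∨
             ((∀ x ∈ Set.Ioo 0 c, f x < 0) ∧ (∀ x ∈ Set.Ioo c L, 0 < f x))) :
    ∀ h ∈ Set.Ioc 0 (L / 2), ∃ x ∈ Set.Icc 0 (L - h), f (x + h) = f x :=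
  levit_one_sign_change_general L f hf h0 hLv c hfc hsign
end
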